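/- For each natural number n ≥ 1, the second derivative F_n'' of F_n(x) = log(∑_{j=0}^n e^{jx}) is integrable on ℝ and ∫_ℝ F_n''(x) dx = n. -/

import Mathlib

/-!
With `A = ∑ e^{jx}`, `B = ∑ j e^{jx}`, `C = ∑ j² e^{jx}`, the derivative `F_n' = B / A` is the mean
of `j` under the weights `e^{jx}` and `F_n'' = (C A - B²) / A²` its variance, nonnegative by
Cauchy–Schwarz. So `F_n'` increases, and `∫ F_n''` is the difference of its limits at `±∞`. At `-∞`
only the term `j = 0` survives and the mean tends to `0`; the reflection `j ↦ n - j` gives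
`A(x) = e^{nx} A(-x)`, hence `F_n'(x) = n - F_n'(-x)`, and the mean tends to `n` at `+∞`.
-/

open MeasureTheory Finset Real Filter Topology

theorem integrable_deriv_of_nonneg_of_tendsto {g g' : ℝ → ℝ} {a b : ℝ}
    (hderiv : ∀ x, HasDerivAt g (g' x) x) (hnonneg : ∀ x, 0 ≤ g' x)
    (hbot : Tendsto g atBot (𝓝 a)) (htop : Tendsto g atTop (𝓝 b)) : Integrable g' := by
  have hIoi : IntegrableOn g' (Set.Ioi 0) :=
    integrableOn_Ioi_deriv_of_nonneg' (fun x _ => hderiv x) (fun x _ => hnonneg x) htop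
  -- reflect: `x ↦ -g (-x)` is increasing, with derivative `g' (-x)` and limit `-a` at `+∞`
  have hIoi_neg : IntegrableOn (fun x => g' (-x)) (Set.Ioi 0) := by
    refine integrableOn_Ioi_deriv_of_nonneg' (g := fun x => -g (-x)) (fun x _ => ?_)
      (fun x _ => hnonneg (-x)) (hbot.comp tendsto_neg_atTop_atBot).neg
    have h := ((hderiv (-x)).comp x (hasDerivAt_neg x)).neg
    rwa [mul_neg_one, neg_neg] at h
  have hIio : IntegrableOn g' (Set.Iio 0) := by
    rw [← (Measure.measurePreserving_neg (volume : Measure ℝ)).integrableOn_comp_preimage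
      (Homeomorph.neg ℝ).measurableEmbedding]
    simpa [Function.comp_def] using hIoi_neg
  rw [← integrableOn_univ, ← Set.Iio_union_Ici (a := (0 : ℝ)), integrableOn_union,
    integrableOn_Ici_iff_integrableOn_Ioi]
  exact ⟨hIio, hIoi⟩

noncomputable section

def expMoment (n k : ℕ) (x : ℝ) : ℝ := ∑ j ∈ range (n + 1), (j : ℝ) ^ k * exp (j * x)

def expMean (n : ℕ) (x : ℝ) : ℝ := expMoment n 1 x / expMoment n 0 x

def expVariance (n : ℕ) (x : ℝ) : ℝ :=
  (expMoment n 2 x * expMoment n 0 x - expMoment n 1 x ^ 2) / expMoment n 0 x ^ 2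

end

namespace expMoment

lemma zero_pos (n : ℕ) (x : ℝ) : 0 < expMoment n 0 x :=
  sum_pos (fun j _ => by positivity) nonempty_range_add_one

lemma hasDerivAt (n k : ℕ) (x : ℝ) : HasDerivAt (expMoment n k) (expMoment n (k + 1) x) x := by
  unfold expMoment
  refine HasDerivAt.fun_sum fun j _ => ?_
  refine ((((hasDerivAt_id' x).const_mul (j : ℝ)).exp).const_mul ((j : ℝ) ^ k)).congr_deriv ?_
  ring

lemma one_sq_le (n : ℕ) (x : ℝ) : expMoment n 1 x ^ 2 ≤ expMoment n 0 x * expMoment n 2 x := by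
  refine sum_sq_le_sum_mul_sum_of_sq_le_mul _ (fun j _ => by positivity) (fun j _ => by positivity)
    fun j _ => le_of_eq ?_
  rw [pow_zero, one_mul, mul_pow, sq (exp _)]
  ring

lemma tendsto_atBot (n k : ℕ) : Tendsto (expMoment n k) atBot (𝓝 (0 ^ k)) := by
  have hterm : ∀ j ∈ range n,
      Tendsto (fun x => ((j + 1 : ℕ) : ℝ) ^ k * exp ((j + 1 : ℕ) * x)) atBot (𝓝 0) := by
    intro j _
    simpa using (tendsto_exp_atBot.comp
      (tendsto_id.const_mul_atBot (Nat.cast_pos.2 j.succ_pos))).const_mul (((j + 1 : ℕ) : ℝ) ^ k)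
  unfold expMoment
  simp_rw [sum_range_succ']
  simpa using (tendsto_finsetSum _ hterm).add_const ((0 : ℝ) ^ k)

lemma zero_eq_exp_mul_neg (n : ℕ) (x : ℝ) :
    expMoment n 0 x = exp (n * x) * expMoment n 0 (-x) := by
  simp only [expMoment, pow_zero, one_mul, mul_sum, ← exp_add]
  rw [← sum_range_reflect]
  refine sum_congr rfl fun j hj => ?_
  rw [Nat.add_sub_cancel, Nat.cast_sub (mem_range_succ_iff.1 hj)]
  ring_nf

end expMoment

lemma hasDerivAt_log_expMoment (n : ℕ) (x : ℝ) :
    HasDerivAt (fun x => log (expMoment n 0 x)) (expMean n x) x :=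
  (expMoment.hasDerivAt n 0 x).log (expMoment.zero_pos n x).ne'

lemma hasDerivAt_expMean (n : ℕ) (x : ℝ) : HasDerivAt (expMean n) (expVariance n x) x := by
  refine ((expMoment.hasDerivAt n 1 x).div (expMoment.hasDerivAt n 0 x)
    (expMoment.zero_pos n x).ne').congr_deriv ?_
  rw [expVariance]
  ring

lemma expVariance_nonneg (n : ℕ) (x : ℝ) : 0 ≤ expVariance n x := by
  refine div_nonneg ?_ (sq_nonneg _)
  linarith [expMoment.one_sq_le n x]

lemma expMean_eq_sub_expMean_neg (n : ℕ) (x : ℝ) : expMean n x = n - expMean n (-x) := by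
  have hreflect : (fun x => log (expMoment n 0 x)) = fun x => n * x + log (expMoment n 0 (-x)) := by
    funext x
    rw [expMoment.zero_eq_exp_mul_neg, log_mul (exp_pos _).ne' (expMoment.zero_pos n _).ne',
      log_exp]
  have h : HasDerivAt (fun y => n * y + log (expMoment n 0 (-y))) (n * 1 + expMean n (-x) * -1) x :=
    ((hasDerivAt_id x).const_mul (n : ℝ)).add
      ((hasDerivAt_log_expMoment n (-x)).comp x (hasDerivAt_neg x))
  rw [← hreflect] at h
  linarith [(hasDerivAt_log_expMoment n x).unique h]

lemma tendsto_expMean_atBot (n : ℕ) : Tendsto (expMean n) atBot (𝓝 0) := by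
  have h := (expMoment.tendsto_atBot n 1).div (expMoment.tendsto_atBot n 0) one_ne_zero
  rwa [pow_one, pow_zero, zero_div] at h

lemma tendsto_expMean_atTop (n : ℕ) : Tendsto (expMean n) atTop (𝓝 n) := by
  rw [funext (expMean_eq_sub_expMean_neg n)]
  simpa using ((tendsto_expMean_atBot n).comp tendsto_neg_atTop_atBot).const_sub _

theorem integrable_and_integral_second_deriv_log_sum_exp_general (n : ℕ) :
    Integrable
      (deriv (deriv (fun y : ℝ =>
        Real.log (∑ j ∈ Finset.range (n + 1), Real.exp (j * y))))) ∧
    ∫ x : ℝ,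
        deriv (deriv (fun y : ℝ =>
          Real.log (∑ j ∈ Finset.range (n + 1), Real.exp (j * y)))) x = (n : ℝ) := by
  have hF'' : deriv (deriv (fun y : ℝ => log (∑ j ∈ range (n + 1), exp (j * y))))
      = expVariance n := by
    have hF' : deriv (fun y : ℝ => log (∑ j ∈ range (n + 1), exp (j * y))) = expMean n :=
      funext fun x => by simpa [expMoment] using (hasDerivAt_log_expMoment n x).deriv
    rw [hF']
    exact funext fun x => (hasDerivAt_expMean n x).deriv
  have hint := integrable_deriv_of_nonneg_of_tendsto (hasDerivAt_expMean n) (expVariance_nonneg n)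
    (tendsto_expMean_atBot n) (tendsto_expMean_atTop n)
  rw [hF'']
  refine ⟨hint, ?_⟩
  simpa using integral_of_hasDerivAt_of_tendsto (hasDerivAt_expMean n) hint
    (tendsto_expMean_atBot n) (tendsto_expMean_atTop n)

/-- For each `n ≥ 1`, the second derivative of `F_n(x) = log (∑_{j=0}^n e^{jx})` is integrable
on `ℝ` and its integral over `ℝ` equals `n`. -/
theorem integrable_and_integral_second_deriv_log_sum_exp (n : ℕ) (hn : 1 ≤ n) :
    Integrable
      (deriv (deriv (fun y : ℝ =>
        Real.log (∑ j ∈ Finset.range (n + 1), Real.exp (j * y))))) ∧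
    ∫ x : ℝ,
        deriv (deriv (fun y : ℝ =>
          Real.log (∑ j ∈ Finset.range (n + 1), Real.exp (j * y)))) x = (n : ℝ) :=
  integrable_and_integral_second_deriv_log_sum_exp_general n
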